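/- Let N+ be a rooted binary phylogenetic network on n ≥ 5 taxa, and suppose {a,b,c,d} and {b,c,d,e} are B-quartets on N+. Then either the 5-element set {a,b,c,d,e} determines the blob of N+ determined by {b,c,d} (so in particular that blob is an m-blob with m ≥ 5), or there is a cut edge of N+ whose deletion leaves a and e in one connected component and b, c, d in the other. -/

import Mathlib

/-!
# Common framework

Finite directed multigraphs, undirected connectivity, numbers of connected
components, cut edges, subgraphs, blobs, blobs determined by leaf sets,
B-quartets, and quartets displayed via cut-edge separation.

A *network* is modelled as a finite directed multigraph (edge directions are
simply ignored for the undirected notions of connectivity, cut edges and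
blobs).
-/

/-- A finite directed multigraph: finite types of nodes and of edges, with
source and target maps. -/
structure MDigraph where
  V : Type
  E : Type
  finV : Finite V
  finE : Finite E
  src : E → V
  tgt : E → V

attribute [instance] MDigraph.finV MDigraph.finE

namespace MDigraph

section Basic

variable (G : MDigraph)

/-- One undirected step between `u` and `v` along an edge from the set `F`. -/
def Step (F : Set G.E) (u v : G.V) : Prop :=
  ∃ e ∈ F, (G.src e = u ∧ G.tgt e = v) ∨ (G.src e = v ∧ G.tgt e = u)

/-- Undirected reachability (an undirected path) using only edges in `F`. -/
def Conn (F : Set G.E) (u v : G.V) : Prop :=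
  Relation.ReflTransGen (G.Step F) u v

/-- One directed step from `u` to `v` along an edge from the set `F`. -/
def DStep (F : Set G.E) (u v : G.V) : Prop :=
  ∃ e ∈ F, G.src e = u ∧ G.tgt e = v

/-- Directed reachability (a directed path) using only edges in `F`. -/
def DConn (F : Set G.E) (u v : G.V) : Prop :=
  Relation.ReflTransGen (G.DStep F) u v

/-- `u` is above (ancestral to) `v`: there is a directed path from `u` to `v`. -/
def Above (u v : G.V) : Prop := G.DConn Set.univ u v

/-- In-degree of a node. -/
noncomputable def inDeg (v : G.V) : ℕ := Nat.card {e : G.E // G.tgt e = v}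

/-- Out-degree of a node. -/
noncomputable def outDeg (v : G.V) : ℕ := Nat.card {e : G.E // G.src e = v}

/-- Undirected degree of a node (a loop counts twice). -/
noncomputable def degree (v : G.V) : ℕ := G.inDeg v + G.outDeg v

/-- The number of connected components of the graph with node set `W` and edge
set the restriction to `W` of `F` (two nodes of `W` lie in the same connected
component iff they are joined by an undirected path). -/
noncomputable def numComponents (W : Set G.V) (F : Set G.E) : ℕ :=
  Nat.card (Quot (fun u v : W => G.Step {e ∈ F | G.src e ∈ W ∧ G.tgt e ∈ W} u.1 v.1))

/-- `v` lies on every directed path from `u` to `w`: there is no directed path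
from `u` to `w` all of whose nodes avoid `v`. -/
def OnEveryPath (v u w : G.V) : Prop :=
  ¬ (u ≠ v ∧ w ≠ v ∧
      Relation.ReflTransGen (fun a b => G.DStep Set.univ a b ∧ a ≠ v ∧ b ≠ v) u w)

end Basic

/-- A subgraph (subnetwork): a set of nodes together with a set of edges
joining them. -/
structure Subgraph (G : MDigraph) where
  verts : Set G.V
  edges : Set G.E
  src_mem : ∀ e ∈ edges, G.src e ∈ verts
  tgt_mem : ∀ e ∈ edges, G.tgt e ∈ verts

/-- The whole graph, as a subgraph of itself. -/
def top (G : MDigraph) : Subgraph G :=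
  ⟨Set.univ, Set.univ, fun _ _ => Set.mem_univ _, fun _ _ => Set.mem_univ _⟩

namespace Subgraph

variable {G : MDigraph}

/-- Containment of subgraphs. -/
def le (H K : Subgraph G) : Prop := H.verts ⊆ K.verts ∧ H.edges ⊆ K.edges

/-- The subgraph `H` is connected. -/
def IsConnected (H : Subgraph G) : Prop :=
  H.verts.Nonempty ∧ ∀ u ∈ H.verts, ∀ v ∈ H.verts, G.Conn H.edges u v

/-- Delete an edge from a subgraph. -/
def deleteEdge (H : Subgraph G) (e : G.E) : Subgraph G :=
  ⟨H.verts, H.edges \ {e}, fun e' he' => H.src_mem e' he'.1,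
    fun e' he' => H.tgt_mem e' he'.1⟩

/-- The number of connected components of a subgraph. -/
noncomputable def numComponents (H : Subgraph G) : ℕ :=
  G.numComponents H.verts H.edges

/-- `e` is a cut edge of the (sub)graph `H`: deleting it increases the number
of connected components. -/
def IsCutEdge (H : Subgraph G) (e : G.E) : Prop :=
  e ∈ H.edges ∧ H.numComponents < (H.deleteEdge e).numComponents

end Subgraph

variable {G : MDigraph}

/-- `B` is a blob of the network `H`: a maximal connected subnetwork of `H`
having no cut edges.  (A blob is *trivial* if it consists of a single node.) -/
def IsBlobIn (H B : Subgraph G) : Prop :=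
  B.le H ∧ B.IsConnected ∧ (∀ e, ¬ B.IsCutEdge e) ∧
    ∀ B' : Subgraph G, B'.le H → B'.IsConnected → (∀ e, ¬ B'.IsCutEdge e) →
      B.le B' → B'.le B

/-- `e` is a cut edge of the network `H` incident to the blob `B`: exactly one
of its endpoints is a node of `B`. -/
def IncidentCut (H B : Subgraph G) (e : G.E) : Prop :=
  H.IsCutEdge e ∧ Xor' (G.src e ∈ B.verts) (G.tgt e ∈ B.verts)

/-- The blob `B` of the network `H` is determined by the set `S` of leaf
labels: deletion of the cut edges of `H` incident to `B` leaves the nodes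
labelled by the elements of `S` in distinct connected components. -/
def DeterminesIn {X : Type} (H B : Subgraph G) (leaf : X → G.V) (S : Set X) : Prop :=
  ∀ s ∈ S, ∀ t ∈ S, s ≠ t →
    ¬ G.Conn {e ∈ H.edges | ¬ IncidentCut H B e} (leaf s) (leaf t)

/-- Four taxa form a B-quartet on the network `H`: some blob of `H` is
determined by them. -/
def BQuartetIn {X : Type} (H : Subgraph G) (leaf : X → G.V) (a b c d : X) : Prop :=
  ∃ B : Subgraph G, IsBlobIn H B ∧ DeterminesIn H B leaf ({a, b, c, d} : Set X)

/-- Some cut edge of `H` separates the taxa `p, q` from the taxa `r, s`: after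
its deletion `p, q` lie in one connected component and `r, s` in another.  For
a 4-taxon set `{p,q,r,s}` this says exactly that the (reduced unrooted) tree of
blobs of `H` displays the resolved quartet `pq|rs` (the edges of the tree of
blobs correspond exactly to the cut edges of the network, and suppressing
degree-2 nodes or contracting blobs does not affect which taxa a cut edge
separates). -/
def CutSep {X : Type} (H : Subgraph G) (leaf : X → G.V) (p q r s : X) : Prop :=
  ∃ e, H.IsCutEdge e ∧
    G.Conn (H.edges \ {e}) (leaf p) (leaf q) ∧
    G.Conn (H.edges \ {e}) (leaf r) (leaf s) ∧
    ¬ G.Conn (H.edges \ {e}) (leaf p) (leaf r)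

end MDigraph
open MDigraph in
/-- A rooted binary phylogenetic network on the taxon set `X`: a connected
directed acyclic graph whose node set consists of a root (in-degree 0,
out-degree 2), leaves (in-degree 1, out-degree 0) bijectively labelled by `X`,
tree nodes (in-degree 1, out-degree 2) and hybrid nodes (in-degree 2,
out-degree 1). -/
structure PhyloNetwork (X : Type) extends MDigraph where
  root : toMDigraph.V
  leaf : X → toMDigraph.V
  leaf_inj : Function.Injective leaf
  root_in : toMDigraph.inDeg root = 0
  root_out : toMDigraph.outDeg root = 2
  leaf_in : ∀ x, toMDigraph.inDeg (leaf x) = 1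
  leaf_out : ∀ x, toMDigraph.outDeg (leaf x) = 0
  internal : ∀ v, v ≠ root → (∀ x, v ≠ leaf x) →
      (toMDigraph.inDeg v = 1 ∧ toMDigraph.outDeg v = 2) ∨
      (toMDigraph.inDeg v = 2 ∧ toMDigraph.outDeg v = 1)
  acyclic : ∀ v, ¬ Relation.TransGen (toMDigraph.DStep Set.univ) v v
  conn : ∀ u v, toMDigraph.Conn Set.univ u v

namespace PhyloNetwork

open MDigraph

variable {X : Type} (N : PhyloNetwork X)

/-- The subnetwork of `N⁺` consisting of all nodes and edges ancestral to at
least one taxon in `Y`.  Since suppressing nodes of in- and out-degree 1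
affects neither blobs, nor cut edges, nor which sets of taxa they separate,
this subnetwork faithfully represents the induced network `N⁺_Y`. -/
def inducedSub (Y : Set X) : Subgraph N.toMDigraph where
  verts := {v | ∃ y ∈ Y, N.toMDigraph.Above v (N.leaf y)}
  edges := {e | ∃ y ∈ Y, N.toMDigraph.Above (N.toMDigraph.tgt e) (N.leaf y)}
  src_mem := by
    rintro e ⟨y, hy, h⟩
    exact ⟨y, hy, Relation.ReflTransGen.head ⟨e, Set.mem_univ e, rfl, rfl⟩ h⟩
  tgt_mem := by
    rintro e ⟨y, hy, h⟩
    exact ⟨y, hy, h⟩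

/-- `v` is a stable ancestor of the leaves: it is ancestral to every leaf and
lies on every directed path from the root to any leaf. -/
def IsStableAncestor (v : N.toMDigraph.V) : Prop :=
  (∀ x, N.toMDigraph.Above v (N.leaf x)) ∧
  ∀ x, N.toMDigraph.OnEveryPath v N.root (N.leaf x)

/-- `v` is the lowest stable ancestor (LSA) of the network: a stable ancestor
below all stable ancestors. -/
def IsLSA (v : N.toMDigraph.V) : Prop :=
  N.IsStableAncestor v ∧ ∀ u, N.IsStableAncestor u → N.toMDigraph.Above u v

/-- The number of cut edges of `N⁺` incident to the blob `B`. -/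
noncomputable def blobDeg (B : Subgraph N.toMDigraph) : ℕ :=
  Nat.card {e : N.toMDigraph.E // IncidentCut (top N.toMDigraph) B e}

/-- `B` is an `m`-blob of the rooted network `N⁺`: if the root is not in `B`
then `B` has exactly `m` incident cut edges, while if the root is in `B` then
`B` has exactly `m - 1` incident cut edges. -/
def IsMBlob (B : Subgraph N.toMDigraph) (m : ℕ) : Prop :=
  IsBlobIn (top N.toMDigraph) B ∧
    ((N.root ∈ B.verts ∧ m = N.blobDeg B + 1) ∨ (N.root ∉ B.verts ∧ m = N.blobDeg B))

end PhyloNetwork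

open MDigraph

/-!
Deleting the cut edges incident to a blob `B` leaves `B` together with one further component
for each of these cut edges.  A blob is the class of any of its vertices under connection by
non-cut edges, so two blobs are equal or disjoint, and two blobs determined by the same three
taxa cannot be disjoint.  Hence the blobs determined by `{a, b, c, d}`, by `{b, c, d, e}` and by
`{b, c, d}` are one blob `B`, and no leaf lies in it.  If `a` and `e` reach different components
around `B`, all five taxa do, so `B` determines `{a, b, c, d, e}` and the five cut edges leading
to them are distinct.  Otherwise the cut edge leading to the common component of `a` and `e`
separates them from `b`, `c`, `d`.
-/

namespace MDigraph

variable {G : MDigraph}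

section Paths

variable (G) in
def Links (g : G.E) (u v : G.V) : Prop :=
  (G.src g = u ∧ G.tgt g = v) ∨ (G.src g = v ∧ G.tgt g = u)

variable {F F' : Set G.E} {g : G.E} {u v w : G.V}

lemma Step.symm (h : G.Step F u v) : G.Step F v u :=
  let ⟨g, hg, h⟩ := h; ⟨g, hg, Or.symm h⟩

lemma Step.mono (hF : F ⊆ F') (h : G.Step F u v) : G.Step F' u v :=
  let ⟨g, hg, h⟩ := h; ⟨g, hF hg, h⟩

lemma Conn.symm (h : G.Conn F u v) : G.Conn F v u :=
  have : Std.Symm (G.Step F) := ⟨fun _ _ => Step.symm⟩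
  Relation.ReflTransGen.stdSymm.symm _ _ h

lemma Conn.trans (h₁ : G.Conn F u v) (h₂ : G.Conn F v w) : G.Conn F u w :=
  Relation.ReflTransGen.trans h₁ h₂

lemma Conn.mono (hF : F ⊆ F') (h : G.Conn F u v) : G.Conn F' u v :=
  Relation.ReflTransGen.mono (fun _ _ => Step.mono hF) _ _ h

lemma Links.conn_iff (h : G.Links g u v) :
    G.Conn F u v ↔ G.Conn F (G.src g) (G.tgt g) := by
  rcases h with ⟨rfl, rfl⟩ | ⟨rfl, rfl⟩
  · rfl
  · exact ⟨Conn.symm, Conn.symm⟩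

lemma Conn.diff_singleton (hg : G.Conn (F \ {g}) (G.src g) (G.tgt g)) (h : G.Conn F u v) :
    G.Conn (F \ {g}) u v := by
  induction h with
  | refl => exact .refl
  | tail _ hstep ih =>
    obtain ⟨e, he, hl⟩ := hstep
    by_cases heg : e = g
    · subst heg
      exact ih.trans ((Links.conn_iff hl).2 hg)
    · exact ih.tail ⟨e, ⟨he, heg⟩, hl⟩

lemma Conn.diff_singleton_or (h : G.Conn F u v) :
    G.Conn (F \ {g}) u v ∨
      (G.Conn (F \ {g}) u (G.src g) ∧ G.Conn (F \ {g}) (G.tgt g) v) ∨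
      (G.Conn (F \ {g}) u (G.tgt g) ∧ G.Conn (F \ {g}) (G.src g) v) := by
  induction h with
  | refl => exact Or.inl .refl
  | @tail x y _ hstep ih =>
    obtain ⟨e, he, hl⟩ := hstep
    by_cases heg : e = g
    · subst heg
      rcases hl with ⟨rfl, rfl⟩ | ⟨rfl, rfl⟩
      · rcases ih with h0 | ⟨h1, -⟩ | ⟨h1, -⟩
        · exact Or.inr (Or.inl ⟨h0, .refl⟩)
        · exact Or.inr (Or.inl ⟨h1, .refl⟩)
        · exact Or.inl h1
      · rcases ih with h0 | ⟨h1, -⟩ | ⟨h1, -⟩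
        · exact Or.inr (Or.inr ⟨h0, .refl⟩)
        · exact Or.inl h1
        · exact Or.inr (Or.inr ⟨h1, .refl⟩)
    · have hstep : G.Step (F \ {g}) x y := ⟨e, ⟨he, heg⟩, hl⟩
      rcases ih with h0 | ⟨h1, h2⟩ | ⟨h1, h2⟩
      · exact Or.inl (h0.tail hstep)
      · exact Or.inr (Or.inl ⟨h1, h2.tail hstep⟩)
      · exact Or.inr (Or.inr ⟨h1, h2.tail hstep⟩)

end Paths

section Components

variable {W : Set G.V} {F : Set G.E}

lemma quot_mk_eq_iff_conn (hWF : ∀ e ∈ F, G.src e ∈ W ∧ G.tgt e ∈ W) (u v : W) :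
    Quot.mk (fun u v : W => G.Step {e ∈ F | G.src e ∈ W ∧ G.tgt e ∈ W} u.1 v.1) u =
      Quot.mk _ v ↔ G.Conn F u v := by
  have hF : {e ∈ F | G.src e ∈ W ∧ G.tgt e ∈ W} = F := Set.sep_eq_self_iff_mem_true.2 hWF
  rw [hF]
  have : Std.Symm (fun u v : W => G.Step F u.1 v.1) := ⟨fun _ _ => Step.symm⟩
  refine ⟨fun h => ?_, fun h => Quot.eqvGen_sound ?_⟩
  · have h' := Quot.eqvGen_exact h
    rw [Relation.EqvGen.eqvGen_eq_reflTransGen] at h'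
    exact Relation.ReflTransGen.lift Subtype.val (fun _ _ h => h) _ _ h'
  · rw [Relation.EqvGen.eqvGen_eq_reflTransGen]
    suffices ∀ x, G.Conn F u x → ∃ hx : x ∈ W,
        Relation.ReflTransGen (fun u v : W => G.Step F u.1 v.1) u ⟨x, hx⟩ from
      (this v h).2
    intro x hx
    induction hx with
    | refl => exact ⟨u.2, .refl⟩
    | @tail y z _ hstep ih =>
      obtain ⟨e, he, hl⟩ := hstep
      have hz : z ∈ W := by
        rcases hl with ⟨-, rfl⟩ | ⟨rfl, -⟩
        exacts [(hWF e he).2, (hWF e he).1]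
      exact ⟨hz, ih.2.tail ⟨e, he, hl⟩⟩

lemma numComponents_le_one_iff (hWF : ∀ e ∈ F, G.src e ∈ W ∧ G.tgt e ∈ W) :
    G.numComponents W F ≤ 1 ↔ ∀ u ∈ W, ∀ v ∈ W, G.Conn F u v := by
  rw [numComponents, Finite.card_le_one_iff_subsingleton]
  refine ⟨fun hs u hu v hv => ?_, fun h => ⟨?_⟩⟩
  · exact (quot_mk_eq_iff_conn hWF ⟨u, hu⟩ ⟨v, hv⟩).1 (Subsingleton.elim _ _)
  · rintro ⟨x⟩ ⟨y⟩
    exact (quot_mk_eq_iff_conn hWF x y).2 (h _ x.2 _ y.2)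

lemma one_le_numComponents (hW : W.Nonempty) : 1 ≤ G.numComponents W F :=
  have : Nonempty (Quot fun u v : W => G.Step {e ∈ F | G.src e ∈ W ∧ G.tgt e ∈ W} u.1 v.1) :=
    ⟨Quot.mk _ ⟨_, hW.some_mem⟩⟩
  Finite.card_pos

end Components

lemma Subgraph.isCutEdge_iff {H : Subgraph G} (hH : H.IsConnected) {g : G.E} :
    H.IsCutEdge g ↔ g ∈ H.edges ∧ ¬ G.Conn (H.edges \ {g}) (G.src g) (G.tgt g) := by
  have hWF : ∀ e ∈ H.edges, G.src e ∈ H.verts ∧ G.tgt e ∈ H.verts :=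
    fun e he => ⟨H.src_mem e he, H.tgt_mem e he⟩
  have hcomp : H.numComponents = 1 :=
    le_antisymm ((numComponents_le_one_iff hWF).2 hH.2) (one_le_numComponents hH.1)
  refine and_congr_right fun hg => ?_
  rw [hcomp, ← not_le, Subgraph.numComponents, Subgraph.deleteEdge,
    numComponents_le_one_iff fun e he => hWF e he.1]
  exact not_congr ⟨fun h => h _ (H.src_mem g hg) _ (H.tgt_mem g hg),
    fun h u hu v hv => h.diff_singleton (hH.2 u hu v hv)⟩

lemma isCutEdge_top_iff (hG : ∀ u v : G.V, G.Conn Set.univ u v) {g : G.E} :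
    (top G).IsCutEdge g ↔ ¬ G.Conn (Set.univ \ {g}) (G.src g) (G.tgt g) :=
  (Subgraph.isCutEdge_iff (H := top G) ⟨⟨G.src g, trivial⟩, fun u _ v _ => hG u v⟩).trans
    (and_iff_right trivial)

lemma _root_.Relation.ReflTransGen.exists_boundary {α : Type*} {r : α → α → Prop}
    {P : α → Prop} {a b : α} (h : Relation.ReflTransGen r a b) (ha : P a) (hb : ¬ P b) :
    ∃ x y, r x y ∧ P x ∧ ¬ P y := by
  induction h with
  | refl => exact absurd ha hb
  | @tail y z _ hyz ih =>
    by_cases hy : P y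
    exacts [⟨y, z, hyz, hy, hb⟩, ih hy]

section Blobs

variable {F : Set G.E} {W D : Set G.V} {B B' : Subgraph G} {g : G.E} {u v w x : G.V}

variable (G) in
def nonCutEdges : Set G.E := {e | ¬ (top G).IsCutEdge e}

variable (G) in
def induce (W : Set G.V) : Subgraph G :=
  ⟨W, {e | G.src e ∈ W ∧ G.tgt e ∈ W}, fun _ he => he.1, fun _ he => he.2⟩

variable (G) in
def edgesOutside (D : Set G.V) : Set G.E := {e | G.src e ∉ D ∧ G.tgt e ∉ D}

def residualEdges (B : Subgraph G) : Set G.E := {e ∈ (top G).edges | ¬ IncidentCut (top G) B e}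

lemma nonCutEdges_subset_diff (hg : (top G).IsCutEdge g) : G.nonCutEdges ⊆ Set.univ \ {g} :=
  fun _ he => ⟨trivial, fun h => he (Set.mem_singleton_iff.1 h ▸ hg)⟩

lemma residualEdges_subset_diff (hg : IncidentCut (top G) B g) :
    residualEdges B ⊆ Set.univ \ {g} :=
  fun _ he => ⟨trivial, fun h => he.2 (Set.mem_singleton_iff.1 h ▸ hg)⟩

lemma Links.mem_of_xor {S : Set G.V} {p q : G.V} (hl : G.Links g p q)
    (hx : Xor (G.src g ∈ S) (G.tgt g ∈ S)) (hp : p ∉ S) : q ∈ S := by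
  rcases hl with ⟨rfl, rfl⟩ | ⟨rfl, rfl⟩ <;> rcases hx with ⟨h1, h2⟩ | ⟨h1, h2⟩ <;> tauto

lemma Links.eq_of_notMem {S : Set G.V} {p q p' q' : G.V} (hl : G.Links g p q)
    (hl' : G.Links g p' q') (hp : p ∉ S) (hp' : p' ∉ S) (hq : q ∈ S) (hq' : q' ∈ S) :
    p = p' := by
  unfold Links at hl hl'
  grind

lemma Step.edgesOutside (h : G.Step F u v) (hu : u ∉ D) (hv : v ∉ D) :
    G.Step (G.edgesOutside D) u v := by
  obtain ⟨e, -, hl⟩ := h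
  refine ⟨e, ?_, hl⟩
  rcases hl with ⟨rfl, rfl⟩ | ⟨rfl, rfl⟩
  exacts [⟨hu, hv⟩, ⟨hv, hu⟩]

lemma Conn.inter_induce (hW : ∀ x y, G.Step F x y → x ∈ W → y ∈ W) (h : G.Conn F u v)
    (hu : u ∈ W) : G.Conn (F ∩ (G.induce W).edges) u v := by
  suffices v ∈ W ∧ G.Conn (F ∩ (G.induce W).edges) u v from this.2
  induction h with
  | refl => exact ⟨hu, .refl⟩
  | @tail y z _ hyz ih =>
    have hz := hW y z hyz ih.1
    obtain ⟨e, he, hl⟩ := hyz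
    refine ⟨hz, ih.2.tail ⟨e, ⟨he, ?_⟩, hl⟩⟩
    rcases hl with ⟨rfl, rfl⟩ | ⟨rfl, rfl⟩
    exacts [⟨ih.1, hz⟩, ⟨hz, ih.1⟩]

lemma Conn.inter_nonCutEdges (hG : ∀ u v : G.V, G.Conn Set.univ u v) (h : G.Conn F u v)
    (hside : ∀ c, (top G).IsCutEdge c → G.Conn (Set.univ \ {c}) u v) :
    G.Conn (F ∩ G.nonCutEdges) u v := by
  classical
  suffices ∀ R : Finset G.E, (∀ c ∈ R, (top G).IsCutEdge c) → G.Conn (F \ R) u v by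
    convert this (Set.toFinite {c | (top G).IsCutEdge c}).toFinset
      fun c hc => by simpa using hc using 2
    ext e
    simp [nonCutEdges]
  intro R hR
  induction R using Finset.induction_on with
  | empty => simpa using h
  | @insert c R _ ih =>
    have ih := ih fun c' hc' => hR c' (Finset.mem_insert_of_mem hc')
    have hcut := (isCutEdge_top_iff hG).1 (hR c (Finset.mem_insert_self c R))
    have hsub : (F \ R) \ {c} ⊆ Set.univ \ {c} := Set.sdiff_subset_sdiff_left (Set.subset_univ _)
    have huv := hside c (hR c (Finset.mem_insert_self c R))
    rw [Finset.coe_insert, Set.insert_eq, Set.union_comm, ← Set.sdiff_sdiff]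
    -- a path through the cut edge `c` would join its two sides, which `huv` rules out
    rcases ih.diff_singleton_or (g := c) with h0 | ⟨h1, h2⟩ | ⟨h1, h2⟩
    · exact h0
    · exact absurd ((h1.mono hsub).symm.trans (huv.trans (h2.mono hsub).symm)) hcut
    · exact absurd ((h2.mono hsub).trans (huv.symm.trans (h1.mono hsub))) hcut

lemma IsBlobIn.edges_subset_nonCutEdges (hG : ∀ u v : G.V, G.Conn Set.univ u v)
    (hB : IsBlobIn (top G) B) : B.edges ⊆ G.nonCutEdges := by
  intro g hg hcut
  have hdet := not_and.1 ((Subgraph.isCutEdge_iff hB.2.1).not.1 (hB.2.2.1 g)) hg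
  exact (isCutEdge_top_iff hG).1 hcut ((not_not.1 hdet).mono (Set.sdiff_subset_sdiff_left
    (Set.subset_univ _)))

lemma IsBlobIn.verts_eq (hG : ∀ u v : G.V, G.Conn Set.univ u v) (hB : IsBlobIn (top G) B)
    (hw : w ∈ B.verts) : B.verts = {v | G.Conn G.nonCutEdges v w} := by
  set W := {v | G.Conn G.nonCutEdges v w}
  have hwW : w ∈ W := .refl
  have hWcl : ∀ x y, G.Step G.nonCutEdges x y → x ∈ W → y ∈ W :=
    fun x y h hx => (Conn.symm (.single h)).trans (hx : G.Conn _ x w)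
  have hBW : B.verts ⊆ W :=
    fun v hv => (hB.2.1.2 v hv w hw).mono (hB.edges_subset_nonCutEdges hG)
  have hWconn : ∀ u ∈ W, ∀ v ∈ W, G.Conn (G.induce W).edges u v := fun u hu v hv =>
    (Conn.inter_induce hWcl ((hu : G.Conn _ u w).trans (Conn.symm hv)) hu).mono
      Set.inter_subset_right
  have hWnocut : ∀ g, ¬ (G.induce W).IsCutEdge g := by
    intro g
    rw [Subgraph.isCutEdge_iff ⟨⟨w, hwW⟩, hWconn⟩]
    rintro ⟨⟨hs, ht⟩, hg⟩
    have hside : ∀ c, (top G).IsCutEdge c → G.Conn (Set.univ \ {c}) (G.src g) (G.tgt g) :=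
      fun c hc => (hs.trans (Conn.symm ht)).mono (nonCutEdges_subset_diff hc)
    have hgnc : g ∈ G.nonCutEdges := fun hc => (isCutEdge_top_iff hG).1 hc (hside g hc)
    have hdet : G.Conn (Set.univ \ {g}) (G.src g) (G.tgt g) :=
      not_not.1 (mt (isCutEdge_top_iff hG).2 hgnc)
    refine hg (Conn.mono ?_ (Conn.inter_induce ?_ (hdet.inter_nonCutEdges hG hside) hs))
    · exact fun e ⟨⟨⟨_, hne⟩, _⟩, hind⟩ => ⟨hind, hne⟩
    · exact fun x y h => hWcl x y (h.mono Set.inter_subset_right)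
  refine hBW.antisymm (hB.2.2.2 (G.induce W) ⟨Set.subset_univ _, Set.subset_univ _⟩
    ⟨⟨w, hwW⟩, hWconn⟩ hWnocut ⟨hBW, fun e he => ⟨hBW (B.src_mem e he), hBW (B.tgt_mem e he)⟩⟩).1

lemma IsBlobIn.verts_eq_of_mem (hG : ∀ u v : G.V, G.Conn Set.univ u v)
    (hB : IsBlobIn (top G) B) (hB' : IsBlobIn (top G) B') (hv : v ∈ B.verts)
    (hv' : v ∈ B'.verts) : B.verts = B'.verts := by
  rw [hB.verts_eq hG hv, hB'.verts_eq hG hv']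

lemma mem_residualEdges : g ∈ residualEdges B ↔ ¬ IncidentCut (top G) B g :=
  and_iff_right trivial

lemma IsBlobIn.mem_of_conn_residualEdges (hG : ∀ u v : G.V, G.Conn Set.univ u v)
    (hB : IsBlobIn (top G) B) (hw : w ∈ B.verts) (h : G.Conn (residualEdges B) w v) :
    v ∈ B.verts := by
  induction h with
  | refl => exact hw
  | @tail y z _ hyz ih =>
    obtain ⟨e, he, hl⟩ := hyz
    by_cases hcut : (top G).IsCutEdge e
    · by_contra hz
      rcases hl with ⟨rfl, rfl⟩ | ⟨rfl, rfl⟩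
      exacts [he.2 ⟨hcut, Or.inl ⟨ih, hz⟩⟩, he.2 ⟨hcut, Or.inr ⟨ih, hz⟩⟩]
    · rw [hB.verts_eq hG ih]
      exact Conn.symm (.single ⟨e, hcut, hl⟩)

lemma IsBlobIn.not_conn_residualEdges (hG : ∀ u v : G.V, G.Conn Set.univ u v)
    (hB : IsBlobIn (top G) B) (hx : x ∉ B.verts) (hw : w ∈ B.verts) :
    ¬ G.Conn (residualEdges B) x w :=
  fun h => hx (hB.mem_of_conn_residualEdges hG hw (Conn.symm h))

/-- Every excursion of a path into `D` starts and ends in `C`, so it can be replaced by a path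
joining its ends outside `D`. -/
lemma conn_edgesOutside {C : Set G.V}
    (hC : ∀ z ∈ C, ∀ z' ∈ C, G.Conn (G.edgesOutside D) z z')
    (hDC : ∀ x y, G.Step Set.univ x y → x ∈ D → y ∉ D → y ∈ C)
    (h : G.Conn Set.univ u v) (hu : u ∉ D) (hv : v ∉ D) : G.Conn (G.edgesOutside D) u v := by
  suffices (v ∉ D → G.Conn (G.edgesOutside D) u v) ∧
      (v ∈ D → ∃ z ∈ C, G.Conn (G.edgesOutside D) u z) from this.1 hv
  clear hv
  induction h with
  | refl => exact ⟨fun _ => .refl, fun h => absurd h hu⟩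
  | @tail y z _ hyz ih =>
    by_cases hy : y ∈ D <;> refine ⟨fun hz => ?_, fun hz => ?_⟩
    · obtain ⟨z', hz', hu'⟩ := ih.2 hy
      exact hu'.trans (hC z' hz' z (hDC y z hyz hy hz))
    · exact ih.2 hy
    · exact (ih.1 hy).tail (hyz.edgesOutside hy hz)
    · exact ⟨y, hDC z y hyz.symm hz hy, ih.1 hy⟩

lemma IsBlobIn.conn_edgesOutside_component (hG : ∀ u v : G.V, G.Conn Set.univ u v)
    (hB : IsBlobIn (top G) B) (hx : x ∉ B.verts) (hu : ¬ G.Conn (residualEdges B) x u)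
    (hv : ¬ G.Conn (residualEdges B) x v) :
    G.Conn (G.edgesOutside {z | G.Conn (residualEdges B) x z}) u v := by
  have hBD : ∀ z ∈ B.verts, ¬ G.Conn (residualEdges B) x z :=
    fun z hz => hB.not_conn_residualEdges hG hx hz
  refine conn_edgesOutside (C := B.verts) (fun z hz z' hz' => ?_) ?_ (hG u v) hu hv
  · exact (hB.2.1.2 z hz z' hz').mono
      fun e he => ⟨hBD _ (B.src_mem e he), hBD _ (B.tgt_mem e he)⟩
  · rintro y z ⟨e, -, hl⟩ hy hz
    have he : IncidentCut (top G) B e := by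
      by_contra he
      exact hz (hy.tail ⟨e, mem_residualEdges.2 he, hl⟩)
    exact Links.mem_of_xor hl he.2 fun h => hBD y h hy

lemma IsBlobIn.exists_incidentCut_links (hG : ∀ u v : G.V, G.Conn Set.univ u v)
    (hB : IsBlobIn (top G) B) (hx : x ∉ B.verts) :
    ∃ g p q, IncidentCut (top G) B g ∧ G.Links g p q ∧ G.Conn (residualEdges B) x p ∧
      q ∈ B.verts := by
  obtain ⟨w, hw⟩ := hB.2.1.1
  obtain ⟨p, q, ⟨g, -, hl⟩, hp, hq⟩ :=
    (hG x w).exists_boundary (P := G.Conn (residualEdges B) x) .refl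
      (hB.not_conn_residualEdges hG hx hw)
  have hg : IncidentCut (top G) B g := by
    by_contra hg
    exact hq (hp.tail ⟨g, mem_residualEdges.2 hg, hl⟩)
  exact ⟨g, p, q, hg, hl, hp,
    Links.mem_of_xor hl hg.2 fun h => hB.not_conn_residualEdges hG hx h hp⟩

lemma IsBlobIn.exists_isCutEdge_separating (hG : ∀ u v : G.V, G.Conn Set.univ u v)
    (hB : IsBlobIn (top G) B) (hx : x ∉ B.verts) :
    ∃ g, (top G).IsCutEdge g ∧
      (∀ y, G.Conn (Set.univ \ {g}) x y ↔ G.Conn (residualEdges B) x y) ∧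
      ∀ u v, ¬ G.Conn (residualEdges B) x u → ¬ G.Conn (residualEdges B) x v →
        G.Conn (Set.univ \ {g}) u v := by
  obtain ⟨g, p, q, hg, hl, hp, hq⟩ := hB.exists_incidentCut_links hG hx
  have hres := residualEdges_subset_diff hg
  have hout : ∀ u v, ¬ G.Conn (residualEdges B) x u → ¬ G.Conn (residualEdges B) x v →
      G.Conn (Set.univ \ {g}) u v := by
    refine fun u v hu hv => (hB.conn_edgesOutside_component hG hx hu hv).mono
      fun e he => ⟨trivial, fun hge => ?_⟩
    rw [Set.mem_singleton_iff.1 hge] at he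
    rcases hl with ⟨hs, -⟩ | ⟨-, ht⟩
    exacts [he.1 (hs ▸ hp), he.2 (ht ▸ hp)]
  refine ⟨g, hg.1, fun y => ⟨fun hy => ?_, fun hy => hy.mono hres⟩, hout⟩
  by_contra hy'
  have hpq := ((Conn.symm (hp.mono hres)).trans hy).trans
    (hout y q hy' (hB.not_conn_residualEdges hG hx hq))
  exact (isCutEdge_top_iff hG).1 hg.1 (hl.conn_iff.1 hpq)

lemma IsBlobIn.card_le_card_incidentCut (hG : ∀ u v : G.V, G.Conn Set.univ u v)
    (hB : IsBlobIn (top G) B) {ι : Type*} (f : ι → G.V) (hf : ∀ i, f i ∉ B.verts)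
    (hsep : ∀ i j, i ≠ j → ¬ G.Conn (residualEdges B) (f i) (f j)) :
    Nat.card ι ≤ Nat.card {g // IncidentCut (top G) B g} := by
  choose g p q hg hl hp hq using fun i => hB.exists_incidentCut_links hG (hf i)
  have hpB : ∀ i, p i ∉ B.verts := fun i h => hf i (hB.mem_of_conn_residualEdges hG h
    (Conn.symm (hp i)))
  refine Nat.card_le_card_of_injective (fun i => ⟨g i, hg i⟩) fun i j hij => ?_
  have hgij : g i = g j := congrArg Subtype.val hij
  have hpij : p i = p j := (hl i).eq_of_notMem (hgij ▸ hl j) (hpB i) (hpB j) (hq i) (hq j)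
  by_contra hne
  exact hsep i j hne ((hp i).trans (hpij ▸ Conn.symm (hp j)))

end Blobs

section Determination

variable {X : Type} {leaf : X → G.V} {H B B' : Subgraph G} {S T : Set X}

lemma DeterminesIn.mono (h : DeterminesIn H B leaf T) (hST : S ⊆ T) :
    DeterminesIn H B leaf S :=
  fun s hs t ht => h s (hST hs) t (hST ht)

lemma determinesIn_congr (h : B.verts = B'.verts) :
    DeterminesIn H B leaf S ↔ DeterminesIn H B' leaf S := by
  unfold DeterminesIn IncidentCut
  rw [h]

lemma DeterminesIn.insert_insert {a a' : X} (hS : DeterminesIn H B leaf (insert a S))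
    (hS' : DeterminesIn H B leaf (insert a' S))
    (haa' : ¬ G.Conn {e ∈ H.edges | ¬ IncidentCut H B e} (leaf a) (leaf a')) :
    DeterminesIn H B leaf (insert a (insert a' S)) := by
  rintro s (rfl | rfl | hs) t (rfl | rfl | ht) hst
  · exact absurd rfl hst
  · exact haa'
  · exact hS _ (.inl rfl) _ (.inr ht) hst
  · exact fun h => haa' (Conn.symm h)
  · exact absurd rfl hst
  · exact hS' _ (.inl rfl) _ (.inr ht) hst
  · exact hS _ (.inr hs) _ (.inl rfl) hst
  · exact hS' _ (.inr hs) _ (.inl rfl) hst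
  · exact hS _ (.inr hs) _ (.inr ht) hst

/-- If `B` and `B'` were disjoint, the component `D` of `B'` after deleting the cut edges at `B`
would contain at most one of the three taxa, and the other two would be joined outside `D`,
hence without the cut edges at `B'`. -/
lemma IsBlobIn.verts_eq_of_determinesIn (hG : ∀ u v : G.V, G.Conn Set.univ u v)
    (hB : IsBlobIn (top G) B) (hB' : IsBlobIn (top G) B') {b c d : X} (hbc : b ≠ c)
    (hbd : b ≠ d) (hcd : c ≠ d) (h : DeterminesIn (top G) B leaf {b, c, d})
    (h' : DeterminesIn (top G) B' leaf {b, c, d}) : B.verts = B'.verts := by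
  by_contra hne
  obtain ⟨w, hw⟩ := hB'.2.1.1
  have hwB : w ∉ B.verts := fun hw' => hne (hB.verts_eq_of_mem hG hB' hw' hw)
  have hB'D : ∀ z ∈ B'.verts, G.Conn (residualEdges B) w z := by
    refine fun z hz => (hB'.2.1.2 w hw z hz).mono fun e he => mem_residualEdges.2 fun hi => ?_
    rcases hi.2 with ⟨h1, -⟩ | ⟨h1, -⟩
    exacts [hne (hB.verts_eq_of_mem hG hB' h1 (B'.src_mem e he)),
      hne (hB.verts_eq_of_mem hG hB' h1 (B'.tgt_mem e he))]
  have hmeet : ∀ s ∈ ({b, c, d} : Set X), ∀ t ∈ ({b, c, d} : Set X), s ≠ t →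
      G.Conn (residualEdges B) w (leaf s) ∨ G.Conn (residualEdges B) w (leaf t) := by
    intro s hs t ht hst
    by_contra! hout
    refine h' s hs t ht hst ((hB.conn_edgesOutside_component hG hwB hout.1 hout.2).mono
      fun e he => mem_residualEdges.2 fun hi => ?_)
    rcases hi.2 with ⟨h1, -⟩ | ⟨h1, -⟩
    exacts [he.1 (hB'D _ h1), he.2 (hB'D _ h1)]
  have hsep : ∀ s ∈ ({b, c, d} : Set X), ∀ t ∈ ({b, c, d} : Set X), s ≠ t →
      G.Conn (residualEdges B) w (leaf s) → ¬ G.Conn (residualEdges B) w (leaf t) :=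
    fun s hs t ht hst hws hwt => h s hs t ht hst ((Conn.symm hws).trans hwt)
  rcases hmeet b (by simp) c (by simp) hbc with hb | hc
  · exact (hmeet c (by simp) d (by simp) hcd).elim (hsep b (by simp) c (by simp) hbc hb)
      (hsep b (by simp) d (by simp) hbd hb)
  · exact (hmeet b (by simp) d (by simp) hbd).elim (hsep c (by simp) b (by simp) hbc.symm hc)
      (hsep c (by simp) d (by simp) hcd hc)

end Determination

end MDigraph

namespace PhyloNetwork

variable {X : Type} (N : PhyloNetwork X) {B : Subgraph N.toMDigraph} {f : N.E} {y : X}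

lemma src_ne_leaf (e : N.E) (y : X) : N.src e ≠ N.leaf y := fun h =>
  (Finite.card_eq_zero_iff.1 (N.leaf_out y)).false ⟨e, h⟩

lemma eq_of_tgt_eq_leaf {e e' : N.E} (he : N.tgt e = N.leaf y) (he' : N.tgt e' = N.leaf y) :
    e = e' :=
  have := Finite.card_le_one_iff_subsingleton.1 (N.leaf_in y).le
  congrArg Subtype.val (Subsingleton.elim (⟨e, he⟩ : {e // N.tgt e = N.leaf y}) ⟨e', he'⟩)

lemma exists_tgt_eq_leaf (y : X) : ∃ f, N.tgt f = N.leaf y := by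
  have : 0 < N.inDeg (N.leaf y) := N.leaf_in y ▸ Nat.one_pos
  obtain ⟨⟨f, hf⟩⟩ := Finite.card_pos_iff.1 this
  exact ⟨f, hf⟩

lemma eq_leaf_of_conn {F : Set N.E} (hf : N.tgt f = N.leaf y) (hfF : f ∉ F) {z : N.V}
    (h : N.Conn F (N.leaf y) z) : z = N.leaf y := by
  rcases Relation.ReflTransGen.cases_head h with rfl | ⟨_, ⟨e, he, hl⟩, -⟩
  · rfl
  · exfalso
    rcases hl with ⟨h1, -⟩ | ⟨-, h2⟩
    exacts [N.src_ne_leaf e y h1, hfF (N.eq_of_tgt_eq_leaf h2 hf ▸ he)]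

lemma isCutEdge_of_tgt_eq_leaf (hf : N.tgt f = N.leaf y) : (top N.toMDigraph).IsCutEdge f :=
  (isCutEdge_top_iff N.conn).2 fun h =>
    N.src_ne_leaf f y (N.eq_leaf_of_conn hf (fun h => h.2 rfl) (hf ▸ Conn.symm h))

lemma conn_diff_of_tgt_eq_leaf (hf : N.tgt f = N.leaf y) {p q : X} (hp : p ≠ y) (hq : q ≠ y) :
    N.Conn (Set.univ \ {f}) (N.leaf p) (N.leaf q) := by
  rcases (N.conn (N.leaf p) (N.leaf q)).diff_singleton_or (g := f) with h | ⟨-, h⟩ | ⟨h, -⟩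
  · exact h
  · exact absurd (N.leaf_inj (N.eq_leaf_of_conn hf (fun h => h.2 rfl) (hf ▸ h))) hq
  · exact absurd (N.leaf_inj (N.eq_leaf_of_conn hf (fun h => h.2 rfl) (hf ▸ Conn.symm h))) hp

/-- Leaves hang from pendant cut edges, so a blob containing a leaf is that single leaf, and
deleting its one incident cut edge disconnects no two other leaves. -/
lemma leaf_notMem_of_determinesIn (hB : IsBlobIn (top N.toMDigraph) B) {b c d : X}
    (hbc : b ≠ c) (hbd : b ≠ d) (hcd : c ≠ d)
    (h : DeterminesIn (top N.toMDigraph) B N.leaf {b, c, d}) (y : X) : N.leaf y ∉ B.verts := by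
  intro hy
  obtain ⟨f, hf⟩ := N.exists_tgt_eq_leaf y
  have hBy : ∀ v ∈ B.verts, v = N.leaf y := fun v hv => by
    rw [hB.verts_eq N.conn hy] at hv
    exact N.eq_leaf_of_conn hf (not_not.2 (N.isCutEdge_of_tgt_eq_leaf hf)) (Conn.symm hv)
  have hres : Set.univ \ {f} ⊆ residualEdges B := fun g hg => mem_residualEdges.2 fun hi => by
    rcases hi.2 with ⟨h1, -⟩ | ⟨h1, -⟩
    · exact N.src_ne_leaf g y (hBy _ h1)
    · exact hg.2 (N.eq_of_tgt_eq_leaf (hBy _ h1) hf)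
  have hy : ∀ p ∈ ({b, c, d} : Set X), ∀ q ∈ ({b, c, d} : Set X), p ≠ q → p = y ∨ q = y := by
    intro p hp q hq hpq
    by_contra! hne
    exact h p hp q hq hpq ((N.conn_diff_of_tgt_eq_leaf hf hne.1 hne.2).mono hres)
  have := hy b (by simp) c (by simp) hbc
  have := hy b (by simp) d (by simp) hbd
  have := hy c (by simp) d (by simp) hcd
  grind

lemma ncard_le_blobDeg (hB : IsBlobIn (top N.toMDigraph) B) (hleaf : ∀ y, N.leaf y ∉ B.verts)
    {S : Set X} (hS : DeterminesIn (top N.toMDigraph) B N.leaf S) : S.ncard ≤ N.blobDeg B :=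
  hB.card_le_card_incidentCut N.conn (fun s : S => N.leaf s) (fun s => hleaf s)
    fun s t hst => hS s s.2 t t.2 (Subtype.coe_ne_coe.2 hst)

lemma exists_isMBlob_of_le_blobDeg (hB : IsBlobIn (top N.toMDigraph) B) {k : ℕ}
    (h : k ≤ N.blobDeg B) : ∃ m, N.IsMBlob B m ∧ k ≤ m := by
  by_cases hr : N.root ∈ B.verts
  · exact ⟨_, ⟨hB, Or.inl ⟨hr, rfl⟩⟩, h.trans (Nat.le_succ _)⟩
  · exact ⟨_, ⟨hB, Or.inr ⟨hr, rfl⟩⟩, h⟩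

end PhyloNetwork

theorem stmt_15_general {X : Type} (N : PhyloNetwork X)
    (a b c d e : X) (hpair : List.Pairwise (· ≠ ·) [a, b, c, d, e])
    (h1 : BQuartetIn (top N.toMDigraph) N.leaf a b c d)
    (h2 : BQuartetIn (top N.toMDigraph) N.leaf b c d e) :
    (∀ B : Subgraph N.toMDigraph, IsBlobIn (top N.toMDigraph) B →
        DeterminesIn (top N.toMDigraph) B N.leaf ({b, c, d} : Set X) →
        DeterminesIn (top N.toMDigraph) B N.leaf ({a, b, c, d, e} : Set X) ∧
        ∃ m, N.IsMBlob B m ∧ 5 ≤ m) ∨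
    (∃ e₀, (top N.toMDigraph).IsCutEdge e₀ ∧
        N.toMDigraph.Conn (Set.univ \ {e₀}) (N.leaf a) (N.leaf e) ∧
        N.toMDigraph.Conn (Set.univ \ {e₀}) (N.leaf b) (N.leaf c) ∧
        N.toMDigraph.Conn (Set.univ \ {e₀}) (N.leaf b) (N.leaf d) ∧
        ¬ N.toMDigraph.Conn (Set.univ \ {e₀}) (N.leaf a) (N.leaf b)) := by
  simp only [ne_eq, List.pairwise_cons, List.mem_cons, List.not_mem_nil, or_false,
    forall_eq_or_imp, forall_eq, IsEmpty.forall_iff, implies_true, List.Pairwise.nil, and_self,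
    and_true] at hpair
  obtain ⟨⟨hab, hac, had, hae⟩, ⟨hbc, hbd, hbe⟩, ⟨hcd, hce⟩, hde⟩ := hpair
  obtain ⟨B₁, hB₁, hdet₁⟩ := h1
  obtain ⟨B₂, hB₂, hdet₂⟩ := h2
  have hbcd₁ := hdet₁.mono (Set.subset_insert a {b, c, d})
  have hebcd₂ : DeterminesIn (top N.toMDigraph) B₂ N.leaf (insert e {b, c, d}) :=
    hdet₂.mono (by simp [Set.insert_subset_iff])
  by_cases hconn : N.Conn (residualEdges B₁) (N.leaf a) (N.leaf e)
  · right
    obtain ⟨g, hg, hcomp, hrest⟩ := hB₁.exists_isCutEdge_separating N.conn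
      (N.leaf_notMem_of_determinesIn hB₁ hbc hbd hcd hbcd₁ a)
    have hab' := hdet₁ a (by simp) b (by simp) hab
    have hac' := hdet₁ a (by simp) c (by simp) hac
    have had' := hdet₁ a (by simp) d (by simp) had
    exact ⟨g, hg, (hcomp _).2 hconn, hrest _ _ hab' hac', hrest _ _ hab' had',
      fun h => hab' ((hcomp _).1 h)⟩
  · left
    intro B hB hdet
    have hv₁ := hB.verts_eq_of_determinesIn N.conn hB₁ hbc hbd hcd hdet hbcd₁
    have hv₂ := hB₂.verts_eq_of_determinesIn N.conn hB₁ hbc hbd hcd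
      (hebcd₂.mono (Set.subset_insert e _)) hbcd₁
    have hdet₅ : DeterminesIn (top N.toMDigraph) B N.leaf {a, b, c, d, e} :=
      (determinesIn_congr hv₁).2 <| (hdet₁.insert_insert ((determinesIn_congr hv₂).1 hebcd₂)
        hconn).mono (by simp [Set.insert_subset_iff])
    have hcard : ({a, b, c, d, e} : Set X).ncard = 5 := by
      simp [Set.ncard_insert_of_notMem, hab, hac, had, hae, hbc, hbd, hbe, hcd, hce, hde]
    refine ⟨hdet₅, N.exists_isMBlob_of_le_blobDeg hB ?_⟩
    exact hcard ▸ N.ncard_le_blobDeg hB (N.leaf_notMem_of_determinesIn hB hbc hbd hcd hdet) hdet₅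

/-- Let `N⁺` be a rooted binary phylogenetic network on `n ≥ 5` taxa, and suppose
`{a,b,c,d}` and `{b,c,d,e}` are B-quartets on `N⁺`.  Then either the
5-element set `{a,b,c,d,e}` determines the blob of `N⁺` determined by
`{b,c,d}` (so in particular that blob is an `m`-blob with `m ≥ 5`), or there
is a cut edge of `N⁺` whose deletion leaves `a` and `e` in one connected
component and `b`, `c`, `d` in the other. -/
theorem stmt_15 {X : Type} (N : PhyloNetwork X) (hn : 5 ≤ Nat.card X)
    (a b c d e : X) (hpair : List.Pairwise (· ≠ ·) [a, b, c, d, e])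
    (h1 : BQuartetIn (top N.toMDigraph) N.leaf a b c d)
    (h2 : BQuartetIn (top N.toMDigraph) N.leaf b c d e) :
    (∀ B : Subgraph N.toMDigraph, IsBlobIn (top N.toMDigraph) B →
        DeterminesIn (top N.toMDigraph) B N.leaf ({b, c, d} : Set X) →
        DeterminesIn (top N.toMDigraph) B N.leaf ({a, b, c, d, e} : Set X) ∧
        ∃ m, N.IsMBlob B m ∧ 5 ≤ m) ∨
    (∃ e₀, (top N.toMDigraph).IsCutEdge e₀ ∧
        N.toMDigraph.Conn (Set.univ \ {e₀}) (N.leaf a) (N.leaf e) ∧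
        N.toMDigraph.Conn (Set.univ \ {e₀}) (N.leaf b) (N.leaf c) ∧
        N.toMDigraph.Conn (Set.univ \ {e₀}) (N.leaf b) (N.leaf d) ∧
        ¬ N.toMDigraph.Conn (Set.univ \ {e₀}) (N.leaf a) (N.leaf b)) :=
  stmt_15_general N a b c d e hpair h1 h2
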